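/- For every x ∈ ℝ³, the integral ∫_{ℝ³} ( e^{−‖x−y‖} / (4π‖x−y‖) ) · ( e^{−‖y‖} / ‖y‖ ) dy converges absolutely and 2 ∫_{ℝ³} ( e^{−‖x−y‖} / (4π‖x−y‖) ) · ( e^{−‖y‖} / ‖y‖ ) dy = e^{−‖x‖}. -/

import Mathlib

/-!
Write `a = ‖x - y‖` and `b = ‖y‖`; since the exponentials multiply, the integrand is
`g (a + b) / (a b)` with `g w = e^{-w} / (4π)`. Rotate `x` to `(r, 0, 0)` with `r = ‖x‖` and use
polar coordinates `(t, θ)` in the planes `y₁ = u`. On each half-line `t > 0` the substitution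
`w = a + b` has Jacobian `t (a + b) / (a b)`, so the plane integral is
`2π ∫_{w > |r - u| + |u|} g w / w dw`. Exchanging the `u`- and `w`-integrals, the set
`{u | |r - u| + |u| < w}` is an interval of length `w` for `w > r` and empty otherwise, hence
`∫ g (a + b) / (a b) dy = 2π ∫_r^∞ g w dw`, which equals `e^{-r} / 2` here.
-/

open Real MeasureTheory Set
open scoped ENNReal

theorem lintegral_comp_sq_add_sq {f : ℝ → ℝ≥0∞} (hf : Measurable f) :
    ∫⁻ q : ℝ × ℝ, f (q.1 ^ 2 + q.2 ^ 2) =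
      ENNReal.ofReal (2 * π) * ∫⁻ t in Ioi 0, ENNReal.ofReal t * f (t ^ 2) := by
  rw [← lintegral_comp_polarCoord_symm]
  have hpolar (p : ℝ × ℝ) : (polarCoord.symm p).1 ^ 2 + (polarCoord.symm p).2 ^ 2 = p.1 ^ 2 := by
    simp only [polarCoord_symm_apply, mul_pow, ← mul_add, cos_sq_add_sin_sq, mul_one]
  simp only [hpolar, smul_eq_mul]
  rw [polarCoord_target, Measure.volume_eq_prod, ← Measure.prod_restrict,
    lintegral_prod _ (by fun_prop)]
  simp only [lintegral_const, Measure.restrict_apply MeasurableSet.univ, univ_inter,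
    Real.volume_Ioo, sub_neg_eq_add, ← two_mul]
  rw [lintegral_mul_const' _ _ ENNReal.ofReal_ne_top, mul_comm]

theorem hasDerivAt_sqrt_sq_add_sq (c : ℝ) {t : ℝ} (ht : t ≠ 0) :
    HasDerivAt (fun s => √(c ^ 2 + s ^ 2)) (t / √(c ^ 2 + t ^ 2)) t := by
  have h := ((hasDerivAt_pow 2 t).const_add (c ^ 2)).sqrt (by positivity)
  convert h using 1
  field_simp
  ring

theorem image_Ioi_sqrt_add_sqrt (c u : ℝ) :
    (fun t => √(c ^ 2 + t ^ 2) + √(u ^ 2 + t ^ 2)) '' Ioi 0 = Ioi (|c| + |u|) := by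
  set φ := fun t => √(c ^ 2 + t ^ 2) + √(u ^ 2 + t ^ 2)
  have hφ0 : φ 0 = |c| + |u| := by simp [φ, sqrt_sq_eq_abs]
  apply Subset.antisymm
  · rintro _ ⟨t, ht, rfl⟩
    have hc : |c| ≤ √(c ^ 2 + t ^ 2) := by
      rw [← sqrt_sq_eq_abs]; exact sqrt_le_sqrt (by nlinarith)
    have hu : |u| < √(u ^ 2 + t ^ 2) := by
      rw [← sqrt_sq_eq_abs]; exact sqrt_lt_sqrt (sq_nonneg u) (by nlinarith [mem_Ioi.mp ht])
    exact add_lt_add_of_le_of_lt hc hu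
  · intro w (hw : |c| + |u| < w)
    have hw0 : 0 < w := (by positivity : 0 ≤ |c| + |u|).trans_lt hw
    have hφw : w < φ (w + 1) := by
      have : w + 1 ≤ √(u ^ 2 + (w + 1) ^ 2) :=
        le_sqrt_of_sq_le (by nlinarith)
      have := sqrt_nonneg (c ^ 2 + (w + 1) ^ 2)
      simp only [φ]; linarith
    obtain ⟨t, ht, rfl⟩ := intermediate_value_Ioo (by linarith) (by fun_prop : ContinuousOn φ _)
      ⟨hφ0 ▸ hw, hφw⟩
    exact ⟨t, ht.1, rfl⟩

theorem monotoneOn_sqrt_add_sqrt (c u : ℝ) :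
    MonotoneOn (fun t => √(c ^ 2 + t ^ 2) + √(u ^ 2 + t ^ 2)) (Ioi 0) := by
  intro s (hs : 0 < s) t _ hst
  have : s ^ 2 ≤ t ^ 2 := pow_le_pow_left₀ hs.le hst 2
  dsimp only
  gcongr

theorem lintegral_Ioi_sqrt_add_sqrt (c u : ℝ) (g : ℝ → ℝ≥0∞) :
    ∫⁻ t in Ioi 0, ENNReal.ofReal t *
        (ENNReal.ofReal (√(c ^ 2 + t ^ 2) * √(u ^ 2 + t ^ 2))⁻¹ *
          g (√(c ^ 2 + t ^ 2) + √(u ^ 2 + t ^ 2))) =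
      ∫⁻ w in Ioi (|c| + |u|), ENNReal.ofReal w⁻¹ * g w := by
  have hderiv : ∀ t ∈ Ioi (0 : ℝ), HasDerivWithinAt (fun t => √(c ^ 2 + t ^ 2) + √(u ^ 2 + t ^ 2))
      (t / √(c ^ 2 + t ^ 2) + t / √(u ^ 2 + t ^ 2)) (Ioi 0) t := fun t ht =>
    ((hasDerivAt_sqrt_sq_add_sq c (ne_of_gt ht)).add
      (hasDerivAt_sqrt_sq_add_sq u (ne_of_gt ht))).hasDerivWithinAt
  rw [← image_Ioi_sqrt_add_sqrt, lintegral_image_eq_lintegral_deriv_mul_of_monotoneOn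
    measurableSet_Ioi hderiv (monotoneOn_sqrt_add_sqrt c u)]
  refine setLIntegral_congr_fun measurableSet_Ioi fun t (ht : 0 < t) => ?_
  have hA : 0 < √(c ^ 2 + t ^ 2) := sqrt_pos.mpr (by positivity)
  have hB : 0 < √(u ^ 2 + t ^ 2) := sqrt_pos.mpr (by positivity)
  rw [← mul_assoc, ← mul_assoc, ← ENNReal.ofReal_mul ht.le, ← ENNReal.ofReal_mul (by positivity)]
  congr 2
  field_simp
  ring

theorem setOf_abs_sub_add_abs_lt (r w : ℝ) :
    {u : ℝ | |r - u| + |u| < w} = if |r| < w then Ioo ((r - w) / 2) ((r + w) / 2) else ∅ := by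
  ext v
  split_ifs with h
  · simp only [mem_ofPred_eq, mem_Ioo]
    constructor
    · intro hv
      rcases abs_cases (r - v) with ⟨h1, _⟩ | ⟨h1, _⟩ <;>
        rcases abs_cases v with ⟨h2, _⟩ | ⟨h2, _⟩ <;> constructor <;> linarith
    · rintro ⟨hv1, hv2⟩
      rcases abs_cases r with ⟨h0, _⟩ | ⟨h0, _⟩ <;>
        rcases abs_cases (r - v) with ⟨h1, _⟩ | ⟨h1, _⟩ <;>
        rcases abs_cases v with ⟨h2, _⟩ | ⟨h2, _⟩ <;> linarith
  · simp only [mem_ofPred_eq, mem_empty_iff_false, iff_false, not_lt]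
    calc w ≤ |r| := not_lt.mp h
      _ = |(r - v) + v| := by rw [sub_add_cancel]
      _ ≤ |r - v| + |v| := abs_add_le _ _

theorem volume_setOf_abs_sub_add_abs_lt (r w : ℝ) :
    volume {u : ℝ | |r - u| + |u| < w} = (Ioi |r|).indicator ENNReal.ofReal w := by
  rw [setOf_abs_sub_add_abs_lt]
  by_cases h : |r| < w
  · rw [if_pos h, indicator_of_mem (mem_Ioi.mpr h), Real.volume_Ioo]; ring_nf
  · rw [if_neg h, indicator_of_notMem (notMem_Ioi.mpr (not_lt.mp h)), measure_empty]

theorem lintegral_lintegral_Ioi_abs_sub_add_abs (r : ℝ) {h : ℝ → ℝ≥0∞} (hh : Measurable h) :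
    ∫⁻ u, ∫⁻ w in Ioi (|r - u| + |u|), h w = ∫⁻ w in Ioi |r|, ENNReal.ofReal w * h w := by
  have hS : MeasurableSet {p : ℝ × ℝ | |r - p.1| + |p.1| < p.2} :=
    measurableSet_lt (by fun_prop) measurable_snd
  calc ∫⁻ u, ∫⁻ w in Ioi (|r - u| + |u|), h w
      = ∫⁻ u, ∫⁻ w, {p : ℝ × ℝ | |r - p.1| + |p.1| < p.2}.indicator (fun p => h p.2) (u, w) := by
        simp_rw [← lintegral_indicator measurableSet_Ioi]; rfl
    _ = ∫⁻ w, ∫⁻ u, {p : ℝ × ℝ | |r - p.1| + |p.1| < p.2}.indicator (fun p => h p.2) (u, w) :=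
        lintegral_lintegral_swap ((hh.comp measurable_snd).indicator hS).aemeasurable
    _ = ∫⁻ w, (Ioi |r|).indicator ENNReal.ofReal w * h w := by
        refine lintegral_congr fun w => ?_
        rw [← volume_setOf_abs_sub_add_abs_lt, mul_comm, ← lintegral_indicator_const
          (measurableSet_lt (by fun_prop) measurable_const)]
        rfl
    _ = ∫⁻ w in Ioi |r|, ENNReal.ofReal w * h w := by
        rw [← lintegral_indicator measurableSet_Ioi]
        simp only [indicator_mul_left]

theorem lintegral_comp_norm_sub_of_norm_eq {E : Type*} [NormedAddCommGroup E]
    [InnerProductSpace ℝ E] [FiniteDimensional ℝ E] [MeasurableSpace E] [BorelSpace E]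
    (F : ℝ → ℝ → ℝ≥0∞) {a b : E} (hab : ‖a‖ = ‖b‖) :
    ∫⁻ y, F ‖a - y‖ ‖y‖ = ∫⁻ y, F ‖b - y‖ ‖y‖ := by
  obtain ⟨e, he⟩ : ∃ e : E ≃ₗᵢ[ℝ] E, e a = b := by
    rcases eq_or_ne a b with rfl | hne
    · exact ⟨LinearIsometryEquiv.refl ℝ E, rfl⟩
    · exact ⟨Submodule.reflection (ℝ ∙ (a - b))ᗮ, Submodule.reflection_sub hab⟩
  rw [← he, ← e.measurePreserving.lintegral_comp_emb e.toMeasurableEquiv.measurableEmbedding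
    (fun y => F ‖e a - y‖ ‖y‖)]
  simp only [← map_sub, e.norm_map]

theorem lintegral_euclideanSpace_fin_three (F : EuclideanSpace ℝ (Fin 3) → ℝ≥0∞) :
    ∫⁻ y, F y = ∫⁻ p : ℝ × ℝ × ℝ, F !₂[p.1, p.2.1, p.2.2] := by
  let e : ℝ × ℝ × ℝ ≃ᵐ EuclideanSpace ℝ (Fin 3) :=
    (MeasurableEquiv.prodCongr (MeasurableEquiv.refl ℝ) MeasurableEquiv.finTwoArrow.symm).trans
      ((MeasurableEquiv.piFinSuccAbove (fun _ : Fin 3 => ℝ) 0).symm.trans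
        (MeasurableEquiv.toLp 2 (Fin 3 → ℝ)))
  have he : MeasurePreserving e :=
    ((EuclideanSpace.volume_preserving_symm_measurableEquiv_toLp (Fin 3)).symm.comp
      (volume_preserving_piFinSuccAbove (fun _ : Fin 3 => ℝ) 0).symm).comp
      ((MeasurePreserving.id volume).prod (volume_preserving_finTwoArrow ℝ).symm)
  rw [← he.lintegral_comp_emb e.measurableEmbedding]
  congr with p
  congr
  ext i
  fin_cases i <;> rfl

theorem norm_toLp_fin_three (a b c : ℝ) : ‖!₂[a, b, c]‖ = √(a ^ 2 + (b ^ 2 + c ^ 2)) := by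
  simp [EuclideanSpace.norm_eq, Fin.sum_univ_three, add_assoc]

theorem toLp_fin_three_sub (a b c a' b' c' : ℝ) :
    !₂[a, b, c] - !₂[a', b', c'] = !₂[a - a', b - b', c - c'] := by
  ext i; fin_cases i <;> rfl

theorem lintegral_inv_norm_sub_mul_norm_mul_comp_add (x : EuclideanSpace ℝ (Fin 3))
    {g : ℝ → ℝ≥0∞} (hg : Measurable g) :
    ∫⁻ y, ENNReal.ofReal (‖x - y‖ * ‖y‖)⁻¹ * g (‖x - y‖ + ‖y‖) =
      ENNReal.ofReal (2 * π) * ∫⁻ w in Ioi ‖x‖, g w := by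
  set r := ‖x‖
  have hx : ‖x‖ = ‖!₂[r, 0, 0]‖ := by simp [norm_toLp_fin_three, sqrt_sq (norm_nonneg x), r]
  calc ∫⁻ y, ENNReal.ofReal (‖x - y‖ * ‖y‖)⁻¹ * g (‖x - y‖ + ‖y‖)
      = ∫⁻ u, ∫⁻ q : ℝ × ℝ, ENNReal.ofReal
          (√((r - u) ^ 2 + (q.1 ^ 2 + q.2 ^ 2)) * √(u ^ 2 + (q.1 ^ 2 + q.2 ^ 2)))⁻¹ *
          g (√((r - u) ^ 2 + (q.1 ^ 2 + q.2 ^ 2)) + √(u ^ 2 + (q.1 ^ 2 + q.2 ^ 2))) := by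
        rw [lintegral_comp_norm_sub_of_norm_eq
            (fun a b => ENNReal.ofReal (a * b)⁻¹ * g (a + b)) hx,
          lintegral_euclideanSpace_fin_three, Measure.volume_eq_prod,
          lintegral_prod _ (by fun_prop)]
        simp only [toLp_fin_three_sub, norm_toLp_fin_three, zero_sub, neg_sq]
    _ = ∫⁻ u, ENNReal.ofReal (2 * π) * ∫⁻ w in Ioi (|r - u| + |u|), ENNReal.ofReal w⁻¹ * g w := by
        refine lintegral_congr fun u => ?_
        rw [lintegral_comp_sq_add_sq (f := fun s => ENNReal.ofReal
          (√((r - u) ^ 2 + s) * √(u ^ 2 + s))⁻¹ * g (√((r - u) ^ 2 + s) + √(u ^ 2 + s)))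
          (by fun_prop), lintegral_Ioi_sqrt_add_sqrt]
    _ = ENNReal.ofReal (2 * π) * ∫⁻ w in Ioi r, g w := by
        rw [lintegral_const_mul' _ _ ENNReal.ofReal_ne_top,
          lintegral_lintegral_Ioi_abs_sub_add_abs r (by fun_prop), abs_of_nonneg (norm_nonneg x)]
        congr 1
        refine setLIntegral_congr_fun measurableSet_Ioi fun w (hw : r < w) => ?_
        have hw0 : 0 < w := (norm_nonneg x).trans_lt hw
        rw [← mul_assoc, ← ENNReal.ofReal_mul hw0.le, mul_inv_cancel₀ hw0.ne', ENNReal.ofReal_one,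
          one_mul]

theorem integrable_and_integral_eq_of_lintegral_ofReal_eq {α : Type*} [MeasurableSpace α]
    {μ : Measure α} {f : α → ℝ} {c : ℝ} (hfm : AEStronglyMeasurable f μ) (hf : 0 ≤ᵐ[μ] f)
    (hc : 0 ≤ c) (h : ∫⁻ a, ENNReal.ofReal (f a) ∂μ = ENNReal.ofReal c) :
    Integrable f μ ∧ ∫ a, f a ∂μ = c :=
  ⟨(lintegral_ofReal_ne_top_iff_integrable hfm hf).mp (h ▸ ENNReal.ofReal_ne_top), by
    rw [integral_eq_lintegral_of_nonneg_ae hf hfm, h, ENNReal.toReal_ofReal hc]⟩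

theorem lintegral_Ioi_ofReal_exp_neg_div (r c : ℝ) (hc : 0 ≤ c) :
    ∫⁻ w in Ioi r, ENNReal.ofReal (exp (-w) / c) = ENNReal.ofReal (exp (-r) / c) := by
  rw [← ofReal_integral_eq_lintegral_ofReal ((integrableOn_exp_neg_Ioi r).div_const c)
    (Filter.Eventually.of_forall fun w => by positivity), integral_div, integral_exp_neg_Ioi]

theorem hydrogen_ground_state_integral_equation (x : EuclideanSpace ℝ (Fin 3)) :
    MeasureTheory.Integrable
        (fun y : EuclideanSpace ℝ (Fin 3) =>
          Real.exp (-‖x - y‖) / (4 * π * ‖x - y‖) * (Real.exp (-‖y‖) / ‖y‖)) ∧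
      2 * ∫ y : EuclideanSpace ℝ (Fin 3),
          Real.exp (-‖x - y‖) / (4 * π * ‖x - y‖) * (Real.exp (-‖y‖) / ‖y‖) =
        Real.exp (-‖x‖) := by
  have hkernel (a b : ℝ) :
      ENNReal.ofReal (exp (-a) / (4 * π * a) * (exp (-b) / b)) =
        ENNReal.ofReal (a * b)⁻¹ * ENNReal.ofReal (exp (-(a + b)) / (4 * π)) := by
    rw [← ENNReal.ofReal_mul' (by positivity), neg_add, exp_add]
    congr 1
    field_simp
  have hlint : ∫⁻ y, ENNReal.ofReal (exp (-‖x - y‖) / (4 * π * ‖x - y‖) * (exp (-‖y‖) / ‖y‖)) =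
      ENNReal.ofReal (exp (-‖x‖) / 2) := by
    simp only [hkernel]
    rw [lintegral_inv_norm_sub_mul_norm_mul_comp_add x
      (g := fun w => ENNReal.ofReal (exp (-w) / (4 * π))) (by fun_prop),
      lintegral_Ioi_ofReal_exp_neg_div _ _ (by positivity), ← ENNReal.ofReal_mul (by positivity)]
    congr 1
    field_simp
    norm_num
  obtain ⟨hint, heq⟩ := integrable_and_integral_eq_of_lintegral_ofReal_eq
    (by fun_prop) (Filter.Eventually.of_forall fun y => by positivity) (by positivity) hlint
  exact ⟨hint, by rw [heq]; ring⟩
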